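/- Let ∂_i be the free difference quotient on ℂ⟨Y₁,…,Y_d⟩ (Leibniz derivation with ∂_i Y_j = 1_{i=j} 1⊗1) and let m(A⊗B) = BA, D_i = m∘∂_i. For monomials Q and R one has the Leibniz-type identity for the second-order term: Δ(QR) = Q·Δ(R) + Δ(Q)·R + ∑_i ⟨⟨∂_iQ, ∂_iR⟩⟩, where Δ(P) = ∑_{i,j,k}⟨⟨(∂_j⊗I)∘∂_k P⟩⟩ with ⟨⟨a⊗b⊗c⟩⟩ = a·τ(b)·c for a trace τ, evaluated at a fixed tuple of elements of a tracial C*-algebra, and ⟨⟨a⊗b, c⊗d⟩⟩ = a·τ(bc)·d. -/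
import Mathlib


open scoped TensorProduct

section

variable {d : ℕ} {𝒜 : Type*}
  [NormedRing 𝒜] [StarRing 𝒜] [CStarRing 𝒜] [NormedAlgebra ℂ 𝒜] [StarModule ℂ 𝒜]
  [CompleteSpace 𝒜]

/-- The contraction `⟨⟨a ⊗ b ⊗ c⟩⟩ = a · τ(b) · c`, after evaluating the noncommutative
polynomials in `𝒜` via the algebra morphism `ev`. -/
noncomputable def angle3 (τ : 𝒜 →ₗ[ℂ] ℂ)
    (ev : FreeAlgebra ℂ (Fin d) →ₐ[ℂ] 𝒜) :
    ((FreeAlgebra ℂ (Fin d) ⊗[ℂ] FreeAlgebra ℂ (Fin d)) ⊗[ℂ] FreeAlgebra ℂ (Fin d)) →ₗ[ℂ] 𝒜 :=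
  LinearMap.mul' ℂ 𝒜 ∘ₗ
    TensorProduct.map
      ((TensorProduct.rid ℂ 𝒜).toLinearMap ∘ₗ
        TensorProduct.map ev.toLinearMap (τ ∘ₗ ev.toLinearMap))
      ev.toLinearMap

/-- The rearrangement `(a ⊗ b) ⊗ (c ⊗ d) ↦ (a ⊗ bc) ⊗ d`, so that
`⟨⟨x, y⟩⟩ = angle3 (pairUp (x ⊗ y))` realizes `⟨⟨a⊗b, c⊗d⟩⟩ = a · τ(bc) · d`. -/
noncomputable def pairUp :
    ((FreeAlgebra ℂ (Fin d) ⊗[ℂ] FreeAlgebra ℂ (Fin d)) ⊗[ℂ]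
        (FreeAlgebra ℂ (Fin d) ⊗[ℂ] FreeAlgebra ℂ (Fin d))) →ₗ[ℂ]
      ((FreeAlgebra ℂ (Fin d) ⊗[ℂ] FreeAlgebra ℂ (Fin d)) ⊗[ℂ] FreeAlgebra ℂ (Fin d)) :=
  TensorProduct.map
      ((TensorProduct.map LinearMap.id (LinearMap.mul' ℂ (FreeAlgebra ℂ (Fin d)))) ∘ₗ
        (TensorProduct.assoc ℂ (FreeAlgebra ℂ (Fin d)) (FreeAlgebra ℂ (Fin d))
          (FreeAlgebra ℂ (Fin d))).toLinearMap)
      LinearMap.id ∘ₗ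
    (TensorProduct.assoc ℂ (FreeAlgebra ℂ (Fin d) ⊗[ℂ] FreeAlgebra ℂ (Fin d))
      (FreeAlgebra ℂ (Fin d)) (FreeAlgebra ℂ (Fin d))).symm.toLinearMap

/-- The second-order term `Δ(P) = ∑_i ⟨⟨(∂_i ⊗ I) ∘ ∂_i P⟩⟩`, evaluated in `𝒜`. -/
noncomputable def Delta (τ : 𝒜 →ₗ[ℂ] ℂ) (ev : FreeAlgebra ℂ (Fin d) →ₐ[ℂ] 𝒜)
    (D : Fin d →
      (FreeAlgebra ℂ (Fin d) →ₗ[ℂ] FreeAlgebra ℂ (Fin d) ⊗[ℂ] FreeAlgebra ℂ (Fin d)))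
    (P : FreeAlgebra ℂ (Fin d)) : 𝒜 :=
  ∑ i : Fin d, angle3 τ ev ((TensorProduct.map (D i) LinearMap.id) (D i P))

lemma angle3_tmul (τ : 𝒜 →ₗ[ℂ] ℂ) (ev : FreeAlgebra ℂ (Fin d) →ₐ[ℂ] 𝒜)
    (a b c : FreeAlgebra ℂ (Fin d)) :
    angle3 τ ev ((a ⊗ₜ[ℂ] b) ⊗ₜ[ℂ] c) = τ (ev b) • (ev a * ev c) := by
  simp [angle3, smul_mul_assoc]

lemma pairUp_tmul (a b c e : FreeAlgebra ℂ (Fin d)) :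
    pairUp ((a ⊗ₜ[ℂ] b) ⊗ₜ[ℂ] (c ⊗ₜ[ℂ] e)) = (a ⊗ₜ[ℂ] (b * c)) ⊗ₜ[ℂ] e := by
  simp [pairUp]

lemma aux1 (τ : 𝒜 →ₗ[ℂ] ℂ) (ev : FreeAlgebra ℂ (Fin d) →ₐ[ℂ] 𝒜)
    (y : FreeAlgebra ℂ (Fin d) ⊗[ℂ] FreeAlgebra ℂ (Fin d)) (b R : FreeAlgebra ℂ (Fin d)) :
    angle3 τ ev (y ⊗ₜ[ℂ] (b * R)) = angle3 τ ev (y ⊗ₜ[ℂ] b) * ev R := by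
  induction y using TensorProduct.induction_on with
  | zero => rw [TensorProduct.zero_tmul, TensorProduct.zero_tmul, map_zero, zero_mul]
  | tmul p q => simp [angle3_tmul, smul_mul_assoc, mul_assoc]
  | add u v hu hv => simp [TensorProduct.add_tmul, hu, hv, add_mul]

/-- Term 1: both derivatives hit `Q`. -/
lemma term1 (τ : 𝒜 →ₗ[ℂ] ℂ) (ev : FreeAlgebra ℂ (Fin d) →ₐ[ℂ] 𝒜)
    (Di : FreeAlgebra ℂ (Fin d) →ₗ[ℂ] FreeAlgebra ℂ (Fin d) ⊗[ℂ] FreeAlgebra ℂ (Fin d))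
    (x : FreeAlgebra ℂ (Fin d) ⊗[ℂ] FreeAlgebra ℂ (Fin d)) (R : FreeAlgebra ℂ (Fin d)) :
    angle3 τ ev ((TensorProduct.map Di LinearMap.id) (x * ((1 : FreeAlgebra ℂ (Fin d)) ⊗ₜ[ℂ] R)))
      = angle3 τ ev ((TensorProduct.map Di LinearMap.id) x) * ev R := by
  induction x using TensorProduct.induction_on with
  | zero => simp
  | tmul a b =>
      rw [Algebra.TensorProduct.tmul_mul_tmul, mul_one]
      simp only [TensorProduct.map_tmul, LinearMap.id_coe, id_eq]
      exact aux1 τ ev (Di a) b R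
  | add u v hu hv => simp [add_mul, hu, hv]

lemma auxA (τ : 𝒜 →ₗ[ℂ] ℂ) (ev : FreeAlgebra ℂ (Fin d) →ₐ[ℂ] 𝒜)
    (y : FreeAlgebra ℂ (Fin d) ⊗[ℂ] FreeAlgebra ℂ (Fin d)) (c e : FreeAlgebra ℂ (Fin d)) :
    angle3 τ ev ((y * ((1 : FreeAlgebra ℂ (Fin d)) ⊗ₜ[ℂ] c)) ⊗ₜ[ℂ] e)
      = angle3 τ ev (pairUp (y ⊗ₜ[ℂ] (c ⊗ₜ[ℂ] e))) := by
  induction y using TensorProduct.induction_on with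
  | zero => simp
  | tmul a b =>
      rw [Algebra.TensorProduct.tmul_mul_tmul, mul_one, pairUp_tmul]
  | add u v hu hv =>
      simp [add_mul, TensorProduct.add_tmul, hu, hv]

lemma auxB (τ : 𝒜 →ₗ[ℂ] ℂ) (ev : FreeAlgebra ℂ (Fin d) →ₐ[ℂ] 𝒜)
    (y : FreeAlgebra ℂ (Fin d) ⊗[ℂ] FreeAlgebra ℂ (Fin d)) (Q e : FreeAlgebra ℂ (Fin d)) :
    angle3 τ ev (((Q ⊗ₜ[ℂ] (1 : FreeAlgebra ℂ (Fin d))) * y) ⊗ₜ[ℂ] e)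
      = ev Q * angle3 τ ev (y ⊗ₜ[ℂ] e) := by
  induction y using TensorProduct.induction_on with
  | zero => simp
  | tmul u v =>
      rw [Algebra.TensorProduct.tmul_mul_tmul, one_mul]
      simp [angle3_tmul, mul_smul_comm, mul_assoc]
  | add u v hu hv =>
      simp [mul_add, TensorProduct.add_tmul, hu, hv, mul_add]

/-- Term 2: the term where at least one derivative hits `R`. -/
lemma term2 (τ : 𝒜 →ₗ[ℂ] ℂ) (ev : FreeAlgebra ℂ (Fin d) →ₐ[ℂ] 𝒜)
    (D : Fin d →
      (FreeAlgebra ℂ (Fin d) →ₗ[ℂ] FreeAlgebra ℂ (Fin d) ⊗[ℂ] FreeAlgebra ℂ (Fin d)))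
    (hLeib : ∀ (i : Fin d) (P Q : FreeAlgebra ℂ (Fin d)),
      D i (P * Q) = D i P * ((1 : FreeAlgebra ℂ (Fin d)) ⊗ₜ[ℂ] Q)
        + (P ⊗ₜ[ℂ] (1 : FreeAlgebra ℂ (Fin d))) * D i Q)
    (i : Fin d) (Q : FreeAlgebra ℂ (Fin d))
    (x : FreeAlgebra ℂ (Fin d) ⊗[ℂ] FreeAlgebra ℂ (Fin d)) :
    angle3 τ ev ((TensorProduct.map (D i) LinearMap.id)
        ((Q ⊗ₜ[ℂ] (1 : FreeAlgebra ℂ (Fin d))) * x))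
      = ev Q * angle3 τ ev ((TensorProduct.map (D i) LinearMap.id) x)
        + angle3 τ ev (pairUp (D i Q ⊗ₜ[ℂ] x)) := by
  induction x using TensorProduct.induction_on with
  | zero => simp
  | tmul c e =>
      rw [Algebra.TensorProduct.tmul_mul_tmul, one_mul]
      simp only [TensorProduct.map_tmul, LinearMap.id_coe, id_eq]
      rw [hLeib i Q c, TensorProduct.add_tmul, map_add, auxA, auxB, add_comm]
  | add u v hu hv =>
      simp only [mul_add, map_add, TensorProduct.tmul_add, hu, hv]
      abel

/-- Leibniz-type identity for the second-order term of the free Itô formula: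
`Δ(QR) = Q·Δ(R) + Δ(Q)·R + ∑_i ⟨⟨∂_iQ, ∂_iR⟩⟩`, for monomials `Q`, `R`, where `∂_i` is the
free difference quotient (`∂_i Y_j = 1_{i=j} 1⊗1`) and `τ` is a trace on `𝒜`. -/
theorem stmt_17 (τ : 𝒜 →ₗ[ℂ] ℂ) (htrace : ∀ a b : 𝒜, τ (a * b) = τ (b * a))
    (ev : FreeAlgebra ℂ (Fin d) →ₐ[ℂ] 𝒜)
    (D : Fin d →
      (FreeAlgebra ℂ (Fin d) →ₗ[ℂ] FreeAlgebra ℂ (Fin d) ⊗[ℂ] FreeAlgebra ℂ (Fin d)))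
    (hLeib : ∀ (i : Fin d) (P Q : FreeAlgebra ℂ (Fin d)),
      D i (P * Q) = D i P * ((1 : FreeAlgebra ℂ (Fin d)) ⊗ₜ[ℂ] Q)
        + (P ⊗ₜ[ℂ] (1 : FreeAlgebra ℂ (Fin d))) * D i Q)
    (hGen : ∀ i j : Fin d, D i (FreeAlgebra.ι ℂ j)
      = if i = j then (1 : FreeAlgebra ℂ (Fin d)) ⊗ₜ[ℂ] (1 : FreeAlgebra ℂ (Fin d)) else 0)
    (Q R : FreeAlgebra ℂ (Fin d))
    (hQ : ∃ w : List (Fin d), Q = (w.map (FreeAlgebra.ι ℂ)).prod)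
    (hR : ∃ w : List (Fin d), R = (w.map (FreeAlgebra.ι ℂ)).prod) :
    Delta τ ev D (Q * R)
      = ev Q * Delta τ ev D R + Delta τ ev D Q * ev R
        + ∑ i : Fin d, angle3 τ ev (pairUp (D i Q ⊗ₜ[ℂ] D i R)) := by
  unfold Delta
  rw [Finset.mul_sum, Finset.sum_mul, ← Finset.sum_add_distrib, ← Finset.sum_add_distrib]
  refine Finset.sum_congr rfl fun i _ => ?_
  rw [hLeib i Q R, map_add, map_add, term1, term2 τ ev D hLeib i Q (D i R)]
  abel

end
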